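/- arXiv:1005.3870 — 5 statements merged into one kernel-verified Lean document; each statement's English description precedes it below -/
import Mathlib

section
/- Let R be the ring of noncommutative formal power series in variables X₁,…,Xₙ over ℝ (or ℤ). The Magnus expansion μ : Fₙ → R×, the homomorphism from the free group on x₁,…,xₙ determined by μ(xᵢ) = 1 + Xᵢ (with μ(xᵢ⁻¹) = 1 - Xᵢ + Xᵢ² - ⋯), is injective. -/
noncomputable section

/-- The algebra of noncommutative formal power series in variables `X 0, …, X (n-1)`
over `R`: a series is given by its coefficients, indexed by noncommutative
monomials, i.e. words in the `n` variables. -/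
def NCSeries (n : ℕ) (R : Type*) := List (Fin n) → R

namespace NCSeries

variable {n : ℕ} {R : Type*} [CommRing R]

instance : AddCommGroup (NCSeries n R) := Pi.addCommGroup
instance : Module R (NCSeries n R) := Pi.module _ _ _

instance : One (NCSeries n R) := ⟨fun w => if w = [] then 1 else 0⟩

/-- Cauchy/convolution product of noncommutative power series. -/
instance : Mul (NCSeries n R) :=
  ⟨fun f g w => ∑ i ∈ Finset.range (w.length + 1), f (w.take i) * g (w.drop i)⟩

theorem mul_def (f g : NCSeries n R) (w : List (Fin n)) :
    (f * g) w = ∑ i ∈ Finset.range (w.length + 1), f (w.take i) * g (w.drop i) := rfl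

theorem one_def (w : List (Fin n)) : (1 : NCSeries n R) w = if w = [] then 1 else 0 := rfl

theorem add_def (f g : NCSeries n R) (w : List (Fin n)) : (f + g) w = f w + g w := rfl

private theorem one_mul' (f : NCSeries n R) : 1 * f = f := by
  funext w
  rw [mul_def]
  rw [Finset.sum_eq_single_of_mem 0 (Finset.mem_range.2 (Nat.succ_pos _))]
  · simp [one_def]
  · intro b hb hb0
    have : w.take b ≠ [] := by
      intro hcon
      rcases List.take_eq_nil_iff.1 hcon with rfl | rfl
      · exact hb0 rfl
      · simp only [List.length_nil, Nat.succ_eq_add_one, Finset.mem_range] at hb; omega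
    rw [one_def, if_neg this, zero_mul]

private theorem mul_one' (f : NCSeries n R) : f * 1 = f := by
  funext w
  rw [mul_def]
  rw [Finset.sum_eq_single_of_mem w.length (Finset.mem_range.2 (Nat.lt_succ_self _))]
  · simp [one_def]
  · intro b hb hb0
    have : w.drop b ≠ [] := by
      intro hcon
      rw [List.drop_eq_nil_iff] at hcon
      simp only [Nat.succ_eq_add_one, Finset.mem_range] at hb; omega
    rw [one_def, if_neg this, mul_zero]

private theorem key_reindex (L : ℕ) (T : ℕ → ℕ → R) :
    ∑ i ∈ Finset.range (L + 1), ∑ j ∈ Finset.range (i + 1), T j (i - j) =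
      ∑ j ∈ Finset.range (L + 1), ∑ m ∈ Finset.range (L - j + 1), T j m := by
  rw [Finset.sum_sigma', Finset.sum_sigma']
  refine Finset.sum_nbij' (fun p => (⟨p.2, p.1 - p.2⟩ : Σ _ : ℕ, ℕ))
    (fun p => (⟨p.1 + p.2, p.1⟩ : Σ _ : ℕ, ℕ)) ?_ ?_ ?_ ?_ ?_
  · rintro ⟨i, j⟩ h
    simp only [Finset.mem_sigma, Finset.mem_range] at h ⊢
    omega
  · rintro ⟨j, m⟩ h
    simp only [Finset.mem_sigma, Finset.mem_range] at h ⊢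
    omega
  · rintro ⟨i, j⟩ h
    simp only [Finset.mem_sigma, Finset.mem_range] at h
    simp only [Sigma.mk.inj_iff]
    exact ⟨by omega, HEq.rfl⟩
  · rintro ⟨j, m⟩ h
    simp only [Finset.mem_sigma, Finset.mem_range] at h
    have hm : j + m - j = m := by omega
    simp [Sigma.mk.inj_iff, hm]
  · rintro ⟨i, j⟩ h
    rfl

private theorem mul_assoc' (f g h : NCSeries n R) : f * g * h = f * (g * h) := by
  funext w
  rw [mul_def (f * g) h, mul_def f (g * h)]
  have step1 : ∑ i ∈ Finset.range (w.length + 1), (f * g) (w.take i) * h (w.drop i) =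
      ∑ i ∈ Finset.range (w.length + 1), ∑ j ∈ Finset.range (i + 1),
        f (w.take j) * (g ((w.drop j).take (i - j)) * h ((w.drop j).drop (i - j))) := by
    refine Finset.sum_congr rfl ?_
    intro i hi
    rw [Finset.mem_range] at hi
    rw [mul_def, Finset.sum_mul]
    have hlen : (w.take i).length = i := by
      rw [List.length_take]; omega
    rw [hlen]
    refine Finset.sum_congr rfl ?_
    intro j hj
    rw [Finset.mem_range] at hj
    rw [List.take_take, min_eq_left (by omega : j ≤ i), List.drop_take,
      List.drop_drop]
    have : j + (i - j) = i := by omega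
    rw [this, mul_assoc]
  have step2 : ∑ j ∈ Finset.range (w.length + 1), f (w.take j) * (g * h) (w.drop j) =
      ∑ j ∈ Finset.range (w.length + 1), ∑ m ∈ Finset.range (w.length - j + 1),
        f (w.take j) * (g ((w.drop j).take m) * h ((w.drop j).drop m)) := by
    refine Finset.sum_congr rfl ?_
    intro j hj
    rw [Finset.mem_range] at hj
    rw [mul_def, Finset.mul_sum, List.length_drop]
  rw [step1, step2,
    key_reindex w.length
      (fun j m => f (w.take j) * (g ((w.drop j).take m) * h ((w.drop j).drop m)))]

instance instRing : Ring (NCSeries n R) :=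
  { (inferInstance : AddCommGroup (NCSeries n R)),
    (inferInstance : One (NCSeries n R)),
    (inferInstance : Mul (NCSeries n R)) with
    mul_assoc := mul_assoc'
    one_mul := one_mul'
    mul_one := mul_one'
    left_distrib := by
      intro a b c
      funext w
      simp only [mul_def, add_def, mul_add, Finset.sum_add_distrib]
    right_distrib := by
      intro a b c
      funext w
      simp only [mul_def, add_def, add_mul, Finset.sum_add_distrib]
    zero_mul := by
      intro a
      funext w
      simp only [mul_def]
      simp [show ∀ u, (0 : NCSeries n R) u = 0 from fun _ => rfl]
    mul_zero := by
      intro a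
      funext w
      simp only [mul_def]
      simp [show ∀ u, (0 : NCSeries n R) u = 0 from fun _ => rfl] }

/-- The variable `Xᵢ`, as a noncommutative power series. -/
def X (i : Fin n) : NCSeries n R := fun w => if w = [i] then 1 else 0

/-- The geometric series `∑ (-1)^k Xᵢ^k`, the inverse of `1 + Xᵢ`. -/
def geom (i : Fin n) : NCSeries n R :=
  fun w => if ∀ a ∈ w, a = i then (-1) ^ w.length else 0

theorem geom_nil (i : Fin n) : geom (R := R) i [] = 1 := by
  rw [geom, if_pos (by simp)]
  simp

theorem geom_cons_self (i : Fin n) (t : List (Fin n)) :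
    geom (R := R) i (i :: t) = -(geom i t) := by
  by_cases ht : ∀ a ∈ t, a = i
  · have h2 : ∀ a ∈ (i :: t), a = i := by
      intro a ha
      rcases List.mem_cons.1 ha with rfl | ha'
      · rfl
      · exact ht a ha'
    rw [geom, geom, if_pos h2, if_pos ht, List.length_cons, pow_succ]
    ring
  · have h2 : ¬ ∀ a ∈ (i :: t), a = i :=
      fun hc => ht fun a ha => hc a (List.mem_cons_of_mem _ ha)
    rw [geom, geom, if_neg h2, if_neg ht, neg_zero]

theorem geom_cons_ne {i a : Fin n} (t : List (Fin n)) (hai : a ≠ i) :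
    geom (R := R) i (a :: t) = 0 := by
  rw [geom, if_neg]
  intro hc
  exact hai (hc a List.mem_cons_self)

theorem geom_concat_self (i : Fin n) (t : List (Fin n)) :
    geom (R := R) i (t ++ [i]) = -(geom i t) := by
  by_cases ht : ∀ a ∈ t, a = i
  · have h2 : ∀ a ∈ t ++ [i], a = i := by
      intro a ha
      rcases List.mem_append.1 ha with ha' | ha'
      · exact ht a ha'
      · simpa using ha'
    rw [geom, geom, if_pos h2, if_pos ht, List.length_append]
    simp [pow_succ]
  · have h2 : ¬ ∀ a ∈ t ++ [i], a = i :=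
      fun hc => ht fun a ha => hc a (List.mem_append_left _ ha)
    rw [geom, geom, if_neg h2, if_neg ht, neg_zero]

theorem geom_concat_ne {i a : Fin n} (t : List (Fin n)) (hai : a ≠ i) :
    geom (R := R) i (t ++ [a]) = 0 := by
  rw [geom, if_neg]
  intro hc
  exact hai (hc a (List.mem_append_right _ (by simp)))

theorem oneAddX_apply (i : Fin n) (w : List (Fin n)) :
    (1 + X i : NCSeries n R) w
      = (if w = [] then 1 else 0) + (if w = [i] then 1 else 0) := rfl

private theorem oneAddX_mul_geom (i : Fin n) :
    (1 + X i : NCSeries n R) * geom i = 1 := by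
  funext w
  cases w with
  | nil =>
    rw [mul_def]
    simp [oneAddX_apply, geom_nil, one_def]
  | cons a t =>
    rw [mul_def]
    simp only [List.length_cons]
    rw [Finset.sum_range_succ' _ (t.length + 1)]
    have h0 : (1 + X i : NCSeries n R) ((a :: t).take 0) * geom i ((a :: t).drop 0)
        = geom i (a :: t) := by
      simp [oneAddX_apply]
    rw [h0]
    have hrest : ∑ k ∈ Finset.range (t.length + 1),
        (1 + X i : NCSeries n R) ((a :: t).take (k + 1)) * geom i ((a :: t).drop (k + 1))
        = (if a = i then (1 : R) else 0) * geom i t := by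
      rw [Finset.sum_eq_single_of_mem 0 (Finset.mem_range.2 (Nat.succ_pos _))]
      · simp only [List.take_succ_cons, List.take_zero, List.drop_succ_cons, List.drop_zero]
        rw [oneAddX_apply]
        by_cases hai : a = i
        · subst hai; simp
        · simp [hai, List.cons_eq_cons]
      · intro b hb hb0
        rw [Finset.mem_range] at hb
        simp only [List.take_succ_cons, List.drop_succ_cons]
        have h1 : (a :: t.take b : List (Fin n)) ≠ [] := by simp
        have h2 : (a :: t.take b : List (Fin n)) ≠ [i] := by
          intro hcon
          rw [List.cons_eq_cons] at hcon
          have h3 : t.take b = [] := hcon.2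
          rcases List.take_eq_nil_iff.1 h3 with h4 | h4
          · exact hb0 h4
          · rw [h4] at hb; simp at hb; omega
        rw [oneAddX_apply, if_neg h1, if_neg h2, add_zero, zero_mul]
    rw [hrest, one_def, if_neg (by simp : ¬(a :: t : List (Fin n)) = [])]
    by_cases hai : a = i
    · subst hai
      rw [if_pos rfl, one_mul, geom_cons_self]
      ring
    · rw [if_neg hai, zero_mul, geom_cons_ne t hai, add_zero]

private theorem geom_mul_oneAddX (i : Fin n) :
    geom i * (1 + X i : NCSeries n R) = 1 := by
  funext w
  rcases List.eq_nil_or_concat w with rfl | ⟨t, a, rfl⟩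
  · rw [mul_def]
    simp [oneAddX_apply, geom_nil, one_def]
  · rw [List.concat_eq_append, mul_def]
    have hL : (t ++ [a]).length = t.length + 1 := by simp
    rw [hL, Finset.sum_range_succ, Finset.sum_range_succ]
    have hlast : geom i ((t ++ [a]).take (t.length + 1)) *
        (1 + X i : NCSeries n R) ((t ++ [a]).drop (t.length + 1)) = geom i (t ++ [a]) := by
      have h1 : (t ++ [a]).take (t.length + 1) = t ++ [a] := by
        rw [← hL, List.take_length]
      have h2 : (t ++ [a]).drop (t.length + 1) = [] := by
        rw [← hL, List.drop_length]
      rw [h1, h2, oneAddX_apply]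
      simp
    have hsnd : geom i ((t ++ [a]).take t.length) *
        (1 + X i : NCSeries n R) ((t ++ [a]).drop t.length)
        = geom i t * (if a = i then (1 : R) else 0) := by
      have h1 : (t ++ [a]).take t.length = t := by
        rw [List.take_left]
      have h2 : (t ++ [a]).drop t.length = [a] := by
        rw [List.drop_left]
      rw [h1, h2, oneAddX_apply]
      by_cases hai : a = i
      · subst hai; simp
      · simp [hai, List.cons_eq_cons]
    have hrest : ∑ k ∈ Finset.range t.length,
        geom i ((t ++ [a]).take k) * (1 + X i : NCSeries n R) ((t ++ [a]).drop k) = 0 := by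
      refine Finset.sum_eq_zero ?_
      intro k hk
      rw [Finset.mem_range] at hk
      have hlen : ((t ++ [a]).drop k).length = t.length + 1 - k := by
        rw [List.length_drop, hL]
      have h1 : (t ++ [a]).drop k ≠ [] := by
        intro hcon; rw [hcon] at hlen; simp at hlen; omega
      have h2 : (t ++ [a]).drop k ≠ [i] := by
        intro hcon; rw [hcon] at hlen; simp at hlen; omega
      rw [oneAddX_apply, if_neg h1, if_neg h2, add_zero, mul_zero]
    rw [hrest, hsnd, hlast, one_def, if_neg (by simp : ¬(t ++ [a] : List (Fin n)) = [])]
    by_cases hai : a = i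
    · subst hai
      rw [if_pos rfl, mul_one, geom_concat_self]
      ring
    · rw [if_neg hai, mul_zero, geom_concat_ne t hai]
      simp

/-- `1 + Xᵢ` as a unit of the power series ring, with inverse the geometric
series `1 - Xᵢ + Xᵢ² - ⋯`. -/
def magnusUnit (i : Fin n) : (NCSeries n R)ˣ :=
  ⟨1 + X i, geom i, oneAddX_mul_geom i, geom_mul_oneAddX i⟩

end NCSeries

/-- The Magnus expansion: the homomorphism from the free group on `n` generators
into the (multiplicative monoid of the) ring of noncommutative formal power
series, determined by `xᵢ ↦ 1 + Xᵢ`. -/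
def magnus (n : ℕ) (R : Type*) [CommRing R] : FreeGroup (Fin n) →* NCSeries n R :=
  (Units.coeHom (NCSeries n R)).comp (FreeGroup.lift NCSeries.magnusUnit)

/-! A nontrivial `w ∈ Fₙ` has the normal form `x_{i₁}^{e₁} ⋯ x_{iₘ}^{eₘ}` in the free product
of the cyclic groups `⟨xᵢ⟩`, with `m ≥ 1`, all `eₖ ≠ 0` and `iₖ ≠ iₖ₊₁`. Each `(1 + Xᵢ)^e` is a
series in `Xᵢ` alone, with constant term `1` and coefficient `e` at `Xᵢ`. As adjacent letters of
the word `X_{i₁} ⋯ X_{iₘ}` differ, each factor can absorb at most one of its letters, so the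
coefficient of this word in `μ(w)` is `e₁ ⋯ eₘ ≠ 0`, while in `1` it is `0`. -/

theorem FreeGroup.lift_apply_eq_zpow_equivIntOfUnique {α G : Type*} [Unique α] [Group G]
    (f : α → G) (g : FreeGroup α) :
    FreeGroup.lift f g = f default ^ FreeGroup.equivIntOfUnique g := by
  conv_lhs => rw [← FreeGroup.equivIntOfUnique.left_inv g]
  simp [FreeGroup.equivIntOfUnique]

namespace NCSeries

open Monoid

variable {n : ℕ} {R : Type*} [CommRing R]

def IsSeriesIn (i : Fin n) (f : NCSeries n R) : Prop :=
  ∀ w, f w ≠ 0 → ∀ a ∈ w, a = i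

theorem isSeriesIn_one (i : Fin n) : IsSeriesIn i (1 : NCSeries n R) := by
  intro w hw a ha
  rw [one_def, ite_ne_right_iff] at hw
  simp [hw.1] at ha

theorem isSeriesIn_oneAddX (i : Fin n) : IsSeriesIn i (1 + X i : NCSeries n R) := by
  intro w hw a ha
  rw [oneAddX_apply] at hw
  by_cases h : w = [i]
  · simpa [h] using ha
  · rw [if_neg h, add_zero, ite_ne_right_iff] at hw
    simp [hw.1] at ha

theorem isSeriesIn_geom (i : Fin n) : IsSeriesIn i (geom i : NCSeries n R) := by
  intro w hw
  rw [geom, ite_ne_right_iff] at hw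
  exact hw.1

theorem IsSeriesIn.mul {i : Fin n} {f g : NCSeries n R} (hf : IsSeriesIn i f)
    (hg : IsSeriesIn i g) : IsSeriesIn i (f * g) := by
  intro w hw a ha
  obtain ⟨s, -, hs⟩ := Finset.exists_ne_zero_of_sum_ne_zero hw
  rw [← List.take_append_drop s w, List.mem_append] at ha
  exact ha.elim (hf _ (left_ne_zero_of_mul hs) a) (hg _ (right_ne_zero_of_mul hs) a)

theorem mul_apply_nil (f g : NCSeries n R) : (f * g) [] = f [] * g [] := by
  simp [mul_def]

theorem mul_apply_singleton (f g : NCSeries n R) (i : Fin n) :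
    (f * g) [i] = f [] * g [i] + f [i] * g [] := by
  simp [mul_def, Finset.sum_range_succ]

theorem val_magnusUnit (i : Fin n) :
    ((magnusUnit i : (NCSeries n R)ˣ) : NCSeries n R) = 1 + X i :=
  rfl

theorem val_inv_magnusUnit (i : Fin n) :
    (((magnusUnit i)⁻¹ : (NCSeries n R)ˣ) : NCSeries n R) = geom i :=
  rfl

theorem isSeriesIn_zpow_magnusUnit (i : Fin n) (k : ℤ) :
    IsSeriesIn i ((magnusUnit i ^ k : (NCSeries n R)ˣ) : NCSeries n R) := by
  induction k using Int.induction_on with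
  | zero => exact isSeriesIn_one i
  | succ k ih =>
    rw [zpow_add_one, Units.val_mul, val_magnusUnit]
    exact ih.mul (isSeriesIn_oneAddX i)
  | pred k ih =>
    rw [zpow_sub_one, Units.val_mul, val_inv_magnusUnit]
    exact ih.mul (isSeriesIn_geom i)

theorem zpow_magnusUnit_apply_nil (i : Fin n) (k : ℤ) :
    ((magnusUnit i ^ k : (NCSeries n R)ˣ) : NCSeries n R) [] = 1 := by
  induction k using Int.induction_on with
  | zero => simp [one_def]
  | succ k ih =>
    rw [zpow_add_one, Units.val_mul, mul_apply_nil, ih, val_magnusUnit, oneAddX_apply]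
    simp
  | pred k ih =>
    rw [zpow_sub_one, Units.val_mul, mul_apply_nil, ih, val_inv_magnusUnit, geom_nil, one_mul]

theorem zpow_magnusUnit_apply_singleton (i : Fin n) (k : ℤ) :
    ((magnusUnit i ^ k : (NCSeries n R)ˣ) : NCSeries n R) [i] = k := by
  induction k using Int.induction_on with
  | zero => simp [one_def]
  | succ k ih =>
    rw [zpow_add_one, Units.val_mul, mul_apply_singleton, ih, zpow_magnusUnit_apply_nil,
      val_magnusUnit, oneAddX_apply, oneAddX_apply]
    simp [add_comm]
  | pred k ih =>
    rw [zpow_sub_one, Units.val_mul, mul_apply_singleton, ih, zpow_magnusUnit_apply_nil,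
      val_inv_magnusUnit, geom_nil, geom_cons_self, geom_nil]
    push_cast
    ring

theorem IsSeriesIn.apply_eq_zero {i : Fin n} {f : NCSeries n R} (hf : IsSeriesIn i f)
    {u : List (Fin n)} (hu : u.IsChain (· ≠ ·)) (hlen : 1 < u.length) : f u = 0 := by
  by_contra hfu
  obtain _ | ⟨a, _ | ⟨b, t⟩⟩ := u
  · simp at hlen
  · simp at hlen
  · exact (List.isChain_cons_cons.1 hu).1 <|
      (hf _ hfu a (by simp)).trans (hf _ hfu b (by simp)).symm

theorem prod_apply_eq_zero_of_length_lt {l : List (Fin n × NCSeries n R)}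
    (hl : ∀ p ∈ l, IsSeriesIn p.1 p.2) {u : List (Fin n)} (hu : u.IsChain (· ≠ ·))
    (hlen : l.length < u.length) : (l.map Prod.snd).prod u = 0 := by
  induction l generalizing u with
  | nil =>
    rw [List.map_nil, List.prod_nil, one_def, if_neg]
    rintro rfl
    simp at hlen
  | cons p l ih =>
    rw [List.map_cons, List.prod_cons, mul_def]
    refine Finset.sum_eq_zero fun s _ => ?_
    by_cases hs : 1 < s
    · rw [(hl p List.mem_cons_self).apply_eq_zero (hu.take s)
        (by simp only [List.length_cons] at hlen; simp; omega), zero_mul]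
    · rw [ih (fun q hq => hl q (List.mem_cons_of_mem p hq)) (hu.drop s)
        (by simp only [List.length_cons] at hlen; simp; omega), mul_zero]

theorem prod_apply_map_fst {l : List (Fin n × NCSeries n R)}
    (hl : ∀ p ∈ l, IsSeriesIn p.1 p.2 ∧ p.2 [] = 1)
    (hchain : l.IsChain fun p q => p.1 ≠ q.1) :
    (l.map Prod.snd).prod (l.map Prod.fst) = (l.map fun p => p.2 [p.1]).prod := by
  induction l with
  | nil => simp [one_def]
  | cons p l ih =>
    have hp := hl p List.mem_cons_self
    have hl' : ∀ q ∈ l, IsSeriesIn q.1 q.2 := fun q hq => (hl q (List.mem_cons_of_mem p hq)).1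
    have hfst : (p.1 :: l.map Prod.fst).IsChain (· ≠ ·) := (List.isChain_map Prod.fst).2 hchain
    rw [List.map_cons, List.prod_cons, List.map_cons, List.map_cons, List.prod_cons, mul_def,
      List.length_cons, List.length_map, Finset.sum_range_succ', Finset.sum_range_succ']
    have h_long : ∀ s ∈ Finset.range l.length,
        p.2 ((p.1 :: l.map Prod.fst).take (s + 1 + 1)) *
          (l.map Prod.snd).prod ((p.1 :: l.map Prod.fst).drop (s + 1 + 1)) = 0 := by
      intro s hs
      rw [hp.1.apply_eq_zero (hfst.take _) (by simp at hs ⊢; omega), zero_mul]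
    have h_empty : (l.map Prod.snd).prod (p.1 :: l.map Prod.fst) = 0 :=
      prod_apply_eq_zero_of_length_lt hl' hfst (by simp)
    rw [Finset.sum_eq_zero h_long, List.take_zero, List.drop_zero, hp.2, h_empty, one_mul,
      List.take_succ_cons, List.take_zero, List.drop_succ_cons, List.drop_zero,
      ih (fun q hq => hl q (List.mem_cons_of_mem p hq)) hchain.tail]
    simp

def magnusFactor (i : Fin n) : FreeGroup Unit →* (NCSeries n R)ˣ :=
  FreeGroup.lift fun _ => magnusUnit i

theorem magnusFactor_apply (i : Fin n) (g : FreeGroup Unit) :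
    magnusFactor (R := R) i g = magnusUnit i ^ FreeGroup.equivIntOfUnique g :=
  FreeGroup.lift_apply_eq_zpow_equivIntOfUnique _ g

theorem magnus_eq_comp_freeGroupEquivCoprodI :
    magnus n R = (Units.coeHom _).comp
      ((CoprodI.lift magnusFactor).comp freeGroupEquivCoprodI.toMonoidHom) := by
  ext i
  simp [magnus, magnusFactor]

theorem lift_magnusFactor_word_prod_apply (w : CoprodI.Word fun _ : Fin n => FreeGroup Unit) :
    ((CoprodI.lift magnusFactor w.prod : (NCSeries n R)ˣ) : NCSeries n R)
        (w.toList.map Sigma.fst) =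
      (w.toList.map fun x => (FreeGroup.equivIntOfUnique x.2 : R)).prod := by
  set l := w.toList.map fun x => (x.1, ((magnusFactor x.1 x.2 : (NCSeries n R)ˣ) : NCSeries n R))
  have hprod : ((CoprodI.lift magnusFactor w.prod : (NCSeries n R)ˣ) : NCSeries n R) =
      (l.map Prod.snd).prod := by
    rw [CoprodI.Word.prod, map_list_prod, ← Units.coeHom_apply, map_list_prod, List.map_map,
      List.map_map, List.map_map]
    rfl
  have hl : ∀ p ∈ l, IsSeriesIn p.1 p.2 ∧ p.2 [] = 1 := by
    simp only [l, List.mem_map]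
    rintro _ ⟨x, -, rfl⟩
    rw [magnusFactor_apply]
    exact ⟨isSeriesIn_zpow_magnusUnit _ _, zpow_magnusUnit_apply_nil _ _⟩
  have hchain : l.IsChain fun p q => p.1 ≠ q.1 := (List.isChain_map _).2 w.chain_ne
  rw [hprod]
  calc (l.map Prod.snd).prod (w.toList.map Sigma.fst)
      = (l.map Prod.snd).prod (l.map Prod.fst) := by simp only [l, List.map_map]; rfl
    _ = (l.map fun p => p.2 [p.1]).prod := prod_apply_map_fst hl hchain
    _ = _ := by
      simp only [l, List.map_map]
      congr 1
      exact List.map_congr_left fun x _ => by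
        simp only [Function.comp, magnusFactor_apply, zpow_magnusUnit_apply_singleton]

theorem lift_magnusFactor_injective [NoZeroDivisors R] [CharZero R] :
    Function.Injective (CoprodI.lift (magnusFactor (n := n) (R := R))) := by
  rw [injective_iff_map_eq_one]
  intro c hc
  obtain ⟨w, rfl⟩ := CoprodI.Word.equiv.symm.surjective c
  change CoprodI.lift magnusFactor w.prod = 1 at hc
  suffices hw : w.toList = [] by rw [show w = .empty from CoprodI.Word.ext hw]; rfl
  have hcoeff := lift_magnusFactor_word_prod_apply (R := R) w
  rw [hc, Units.val_one, one_def] at hcoeff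
  by_contra hw
  rw [if_neg (by simpa using hw), eq_comm] at hcoeff
  obtain ⟨x, hx, hx0⟩ := List.mem_map.1 (List.prod_eq_zero_iff.1 hcoeff)
  refine w.ne_one x hx ?_
  rw [← FreeGroup.equivIntOfUnique.symm_apply_apply x.2, Int.cast_eq_zero.1 hx0]
  exact zpow_zero _

theorem magnus_injective_of_charZero [NoZeroDivisors R] [CharZero R] :
    Function.Injective (magnus n R) := by
  rw [magnus_eq_comp_freeGroupEquivCoprodI]
  exact Units.val_injective.comp
    (lift_magnusFactor_injective.comp freeGroupEquivCoprodI.injective)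

end NCSeries

/-- The Magnus expansion `μ : Fₙ → ℝ⟨⟨X₁,…,Xₙ⟩⟩`, the
homomorphism from the free group on `n` generators determined by
`μ(xᵢ) = 1 + Xᵢ`, is injective. -/
theorem magnus_injective (n : ℕ) :
    (∀ i : Fin n, magnus n ℝ (FreeGroup.of i) = 1 + NCSeries.X i) ∧
    Function.Injective (magnus n ℝ) :=
  ⟨fun i => by simp [magnus, NCSeries.val_magnusUnit], NCSeries.magnus_injective_of_charZero⟩
end
end

section
/- Let G be a group and (G_k)_{k≥1} a descending chain of normal subgroups with G₁ = G and ⋂_k G_k = {1}, such that each extension 1 → G_k/G_{k+1} → G/G_{k+1} → G/G_k → 1 is central and each G_k/G_{k+1} is torsion-free abelian. Then G is bi-orderable. -/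
/-!
A maximal group cone in a torsion-free abelian group contains, with some positive power of an
element, the element itself; hence it contains `a` or `a⁻¹` for every `a`, and so every
torsion-free abelian group is linearly orderable. Order each quotient `G_n ⧸ G_{n+1}` this way and
call `g ≠ 1` positive when its class in `G_n ⧸ G_{n+1}` is, for the unique `n` with
`g ∈ G_n \ G_{n+1}`. The resulting positive cone is closed under products since the tower
descends, and under conjugation since the tower is central, so `a < b ↔ 1 < a⁻¹ * b` is a
bi-ordering.
-/

/-- A bi-invariant total order (bi-ordering) on a group `G`. -/
def IsBiOrdering {G : Type*} [Group G] (r : G → G → Prop) : Prop :=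
  IsStrictTotalOrder G r ∧ ∀ a b c : G, r a b → r (c * a) (c * b) ∧ r (a * c) (b * c)

namespace GroupCone

variable {A : Type*} [CommGroup A]

lemma exists_isMax : ∃ C : GroupCone A, IsMax C := by
  have : Nonempty (GroupCone A) :=
    ⟨{ (⊥ : Submonoid A) with eq_one_of_mem_of_inv_mem' := fun h _ ↦ h }⟩
  refine zorn_le_nonempty fun c hc ⟨C₀, hC₀⟩ ↦ ?_
  have total {C D} (hC : C ∈ c) (hD : D ∈ c) : C ≤ D ∨ D ≤ C := hc.total hC hD
  refine ⟨{ carrier := ⋃ C ∈ c, (C : Set A)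
            mul_mem' := ?_
            one_mem' := Set.mem_biUnion hC₀ (one_mem C₀)
            eq_one_of_mem_of_inv_mem' := ?_ }, fun C hC x hx ↦ Set.mem_biUnion hC hx⟩
  · simp only [Set.mem_iUnion₂, SetLike.mem_coe]
    rintro a b ⟨C, hC, ha⟩ ⟨D, hD, hb⟩
    rcases total hC hD with h | h
    · exact ⟨D, hD, mul_mem (h ha) hb⟩
    · exact ⟨C, hC, mul_mem ha (h hb)⟩
  · simp only [Set.mem_iUnion₂, SetLike.mem_coe]
    rintro a ⟨C, hC, ha⟩ ⟨D, hD, ha'⟩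
    rcases total hC hD with h | h
    · exact eq_one_of_mem_of_inv_mem (h ha) ha'
    · exact eq_one_of_mem_of_inv_mem ha (h ha')

variable [IsMulTorsionFree A] {C : GroupCone A}

lemma mem_of_pow_mem_of_isMax (hC : IsMax C) {a : A} {n : ℕ} (hn : n ≠ 0) (ha : a ^ n ∈ C) :
    a ∈ C := by
  let D : GroupCone A :=
    { carrier := {a | ∃ n ≠ 0, a ^ n ∈ C}
      mul_mem' := by
        rintro a b ⟨n, hn, ha⟩ ⟨m, hm, hb⟩
        refine ⟨n * m, mul_ne_zero hn hm, ?_⟩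
        rw [mul_pow, pow_mul, pow_mul']
        exact mul_mem (pow_mem ha m) (pow_mem hb n)
      one_mem' := ⟨1, one_ne_zero, by simp [one_mem]⟩
      eq_one_of_mem_of_inv_mem' := by
        rintro a ⟨n, hn, ha⟩ ⟨m, hm, ha'⟩
        have hinv : ((a ^ n) ^ m)⁻¹ ∈ C := by
          simpa [← pow_mul, mul_comm n m] using pow_mem ha' n
        rw [← pow_eq_one_iff_left (mul_ne_zero hn hm), pow_mul]
        exact eq_one_of_mem_of_inv_mem (pow_mem ha m) hinv }
  exact @hC D (fun x hx ↦ ⟨1, one_ne_zero, by simpa using hx⟩) a ⟨n, hn, ha⟩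

lemma mem_or_inv_mem_of_isMax (hC : IsMax C) (a : A) : a ∈ C ∨ a⁻¹ ∈ C := by
  by_contra! h
  let D : GroupCone A :=
    { C.toSubmonoid ⊔ Submonoid.powers a with
      eq_one_of_mem_of_inv_mem' := by
        intro x hx hx'
        obtain ⟨c, hc, _, ⟨n, rfl⟩, rfl⟩ := Submonoid.mem_sup.1 hx
        obtain ⟨d, hd, _, ⟨m, rfl⟩, hdm⟩ := Submonoid.mem_sup.1 hx'
        have hcd : a⁻¹ ^ (n + m) = c * d := by
          rw [inv_pow, inv_eq_iff_mul_eq_one, pow_add]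
          calc a ^ n * a ^ m * (c * d) = c * a ^ n * (d * a ^ m) := by ac_rfl
            _ = 1 := by rw [hdm, mul_inv_cancel]
        obtain hnm | hnm := eq_or_ne (n + m) 0
        · obtain ⟨rfl, rfl⟩ : n = 0 ∧ m = 0 := by omega
          rw [pow_zero, eq_comm, mul_eq_one_iff_inv_eq] at hcd
          simp only [pow_zero, mul_one]
          exact eq_one_of_mem_of_inv_mem (C := C) hc (by rwa [hcd])
        · exact absurd (mem_of_pow_mem_of_isMax hC hnm (hcd ▸ mul_mem hc hd)) h.2 }
  exact h.1 (@hC D (fun x hx ↦ Submonoid.mem_sup_left hx) a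
    (Submonoid.mem_sup_right (Submonoid.mem_powers a)))

end GroupCone

theorem CommGroup.exists_linearOrder_isOrderedMonoid (A : Type*) [CommGroup A]
    [IsMulTorsionFree A] : ∃ _ : LinearOrder A, IsOrderedMonoid A := by
  classical
  obtain ⟨C, hC⟩ := GroupCone.exists_isMax (A := A)
  have : HasMemOrInvMem C := ⟨GroupCone.mem_or_inv_mem_of_isMax hC⟩
  exact ⟨LinearOrder.mkOfGroupCone C, IsOrderedMonoid.mkOfCone C⟩

section

variable {G : Type*} [Group G]

theorem isBiOrdering_of_positiveCone {P : Set G} (mul_mem : ∀ a ∈ P, ∀ b ∈ P, a * b ∈ P)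
    (conj_mem : ∀ a ∈ P, ∀ x : G, x⁻¹ * a * x ∈ P) (one_notMem : (1 : G) ∉ P)
    (mem_or_inv_mem : ∀ a : G, a ≠ 1 → a ∈ P ∨ a⁻¹ ∈ P) :
    IsBiOrdering fun a b : G ↦ a⁻¹ * b ∈ P := by
  refine ⟨{ irrefl := fun a ha ↦ one_notMem (by rwa [inv_mul_cancel] at ha)
            trans := fun a b c hab hbc ↦ by simpa [mul_assoc] using mul_mem _ hab _ hbc
            trichotomous := fun a b hab hba ↦ ?_ }, fun a b c hab ↦ ⟨?_, ?_⟩⟩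
  · by_contra hne
    rcases mem_or_inv_mem (a⁻¹ * b) (by rwa [Ne, inv_mul_eq_one]) with h | h
    · exact hab h
    · exact hba (by simpa using h)
  · simpa [mul_assoc] using hab
  · simpa [mul_assoc] using conj_mem _ hab c

/-- The preimage in `H` of the strictly positive elements of an ordering of `H ⧸ N`. -/
structure IsRelPositiveCone (H N : Subgroup G) (P : Set G) : Prop where
  subset : P ⊆ H
  notMem : ∀ ⦃x⦄, x ∈ P → x ∉ N
  mul_mem : ∀ ⦃x y⦄, x ∈ P → y ∈ P → x * y ∈ P
  mem_of_inv_mul_mem : ∀ ⦃x y⦄, x ∈ P → y ∈ H → x⁻¹ * y ∈ N → y ∈ P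
  mem_or_inv_mem : ∀ ⦃g⦄, g ∈ H → g ∉ N → g ∈ P ∨ g⁻¹ ∈ P

lemma IsRelPositiveCone.of_monoidHom {H N : Subgroup G} {Q : Type*} [CommGroup Q] [LinearOrder Q]
    [IsOrderedMonoid Q] (f : H →* Q) (hf : ∀ h : H, f h = 1 ↔ (h : G) ∈ N) :
    IsRelPositiveCone H N (Subtype.val '' {h | 1 < f h}) where
  subset := by rintro _ ⟨h, -, rfl⟩; exact h.2
  notMem := by rintro _ ⟨h, hh, rfl⟩ hN; exact hh.ne' ((hf h).2 hN)
  mul_mem := by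
    rintro _ _ ⟨h, hh, rfl⟩ ⟨h', hh', rfl⟩
    exact ⟨h * h', by simpa using one_lt_mul' hh hh', rfl⟩
  mem_of_inv_mul_mem := by
    rintro _ y ⟨h, hh, rfl⟩ hy hN
    refine ⟨⟨y, hy⟩, ?_, rfl⟩
    have hfy : f h = f ⟨y, hy⟩ := by simpa [inv_mul_eq_one] using (hf (h⁻¹ * ⟨y, hy⟩)).2 hN
    exact show 1 < f ⟨y, hy⟩ from hfy ▸ hh
  mem_or_inv_mem := by
    intro g hg hgN
    rcases lt_or_gt_of_ne (mt (hf ⟨g, hg⟩).1 hgN) with h | h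
    · exact Or.inr ⟨⟨g, hg⟩⁻¹, by simpa using h, rfl⟩
    · exact Or.inl ⟨⟨g, hg⟩, h, rfl⟩

theorem exists_isRelPositiveCone {H N : Subgroup G} [(N.subgroupOf H).Normal]
    (comm_mem : ∀ g ∈ H, ∀ h ∈ H, g⁻¹ * h⁻¹ * g * h ∈ N)
    (mem_of_pow_mem : ∀ g ∈ H, ∀ n ≠ 0, g ^ n ∈ N → g ∈ N) :
    ∃ P, IsRelPositiveCone H N P := by
  let _ : CommGroup (H ⧸ N.subgroupOf H) :=
    { QuotientGroup.Quotient.group _ with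
      mul_comm := by
        intro a b
        induction a using QuotientGroup.induction_on with | H x => ?_
        induction b using QuotientGroup.induction_on with | H y => ?_
        rw [← QuotientGroup.mk_mul, ← QuotientGroup.mk_mul, QuotientGroup.eq,
          Subgroup.mem_subgroupOf]
        simpa [mul_assoc] using comm_mem y y.2 x x.2 }
  have : IsMulTorsionFree (H ⧸ N.subgroupOf H) := by
    refine IsMulTorsionFree.of_not_isOfFinOrder fun a ha hfin ↦ ha ?_
    induction a using QuotientGroup.induction_on with | H g => ?_
    obtain ⟨n, hn, hgn⟩ := isOfFinOrder_iff_pow_eq_one.1 hfin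
    rw [← QuotientGroup.mk_pow, QuotientGroup.eq_one_iff, Subgroup.mem_subgroupOf] at hgn
    rw [QuotientGroup.eq_one_iff, Subgroup.mem_subgroupOf]
    exact mem_of_pow_mem g g.2 n hn.ne' (by simpa using hgn)
  obtain ⟨_, _⟩ := CommGroup.exists_linearOrder_isOrderedMonoid (H ⧸ N.subgroupOf H)
  refine ⟨_, IsRelPositiveCone.of_monoidHom (Q := H ⧸ N.subgroupOf H) (QuotientGroup.mk' _) ?_⟩
  simp [QuotientGroup.eq_one_iff, Subgroup.mem_subgroupOf]

lemma Subgroup.normal_of_commutator_mem {K N : Subgroup G} (hNK : N ≤ K)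
    (comm_mem : ∀ g ∈ K, ∀ x : G, x⁻¹ * g⁻¹ * x * g ∈ N) : K.Normal where
  conj_mem g hg x := by
    have h : x * g⁻¹ * x⁻¹ ∈ K := by
      simpa using K.mul_mem (hNK (comm_mem g hg x⁻¹)) (K.inv_mem hg)
    simpa [mul_assoc] using K.inv_mem h

section CentralSeries

variable {H : ℕ → Subgroup G} {P : ℕ → Set G}

lemma mul_mem_iUnion_of_isRelPositiveCone (desc : ∀ n, H (n + 1) ≤ H n)
    (normal : ∀ n, (H n).Normal) (hP : ∀ n, IsRelPositiveCone (H n) (H (n + 1)) (P n))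
    {g h : G} (hg : g ∈ ⋃ n, P n) (hh : h ∈ ⋃ n, P n) : g * h ∈ ⋃ n, P n := by
  have anti : Antitone H := antitone_nat_of_succ_le desc
  simp only [Set.mem_iUnion] at hg hh ⊢
  obtain ⟨k, hg⟩ := hg
  obtain ⟨l, hh⟩ := hh
  rcases lt_trichotomy k l with hkl | rfl | hlk
  · have hh' : h ∈ H (k + 1) := anti hkl ((hP l).subset hh)
    refine ⟨k, (hP k).mem_of_inv_mul_mem hg (mul_mem ((hP k).subset hg) (desc k hh')) ?_⟩
    simpa using hh'
  · exact ⟨k, (hP k).mul_mem hg hh⟩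
  · have hg' : g ∈ H (l + 1) := anti hlk ((hP k).subset hg)
    refine ⟨l, (hP l).mem_of_inv_mul_mem hh (mul_mem (desc l hg') ((hP l).subset hh)) ?_⟩
    simpa [mul_assoc] using (normal (l + 1)).conj_mem g hg' h⁻¹

lemma conj_mem_iUnion_of_isRelPositiveCone (normal : ∀ n, (H n).Normal)
    (comm_mem : ∀ n, ∀ g ∈ H n, ∀ x : G, x⁻¹ * g⁻¹ * x * g ∈ H (n + 1))
    (hP : ∀ n, IsRelPositiveCone (H n) (H (n + 1)) (P n))
    {g : G} (hg : g ∈ ⋃ n, P n) (x : G) : x⁻¹ * g * x ∈ ⋃ n, P n := by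
  simp only [Set.mem_iUnion] at hg ⊢
  obtain ⟨k, hg⟩ := hg
  refine ⟨k, (hP k).mem_of_inv_mul_mem hg ?_ ?_⟩
  · simpa using (normal k).conj_mem g ((hP k).subset hg) x⁻¹
  · simpa [mul_assoc] using (H (k + 1)).inv_mem (comm_mem k g ((hP k).subset hg) x)

lemma one_notMem_iUnion_of_isRelPositiveCone
    (hP : ∀ n, IsRelPositiveCone (H n) (H (n + 1)) (P n)) : (1 : G) ∉ ⋃ n, P n := by
  simp only [Set.mem_iUnion, not_exists]
  exact fun n h ↦ (hP n).notMem h (one_mem _)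

lemma mem_or_inv_mem_iUnion_of_isRelPositiveCone (top : H 0 = ⊤)
    (inter : ∀ g : G, (∀ n, g ∈ H n) → g = 1)
    (hP : ∀ n, IsRelPositiveCone (H n) (H (n + 1)) (P n)) {g : G} (hg : g ≠ 1) :
    g ∈ ⋃ n, P n ∨ g⁻¹ ∈ ⋃ n, P n := by
  obtain ⟨n, hn, hn'⟩ := Nat.exists_not_and_succ_of_not_zero_of_exists (p := fun n ↦ g ∉ H n)
    (by simp [top]) (by by_contra! h; exact hg (inter g h))
  simp only [Set.mem_iUnion]
  rcases (hP n).mem_or_inv_mem (not_not.1 hn) hn' with h | h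
  · exact Or.inl ⟨n, h⟩
  · exact Or.inr ⟨n, h⟩

theorem exists_isBiOrdering_of_central_series (H : ℕ → Subgroup G) (top : H 0 = ⊤)
    (desc : ∀ n, H (n + 1) ≤ H n) (inter : ∀ g : G, (∀ n, g ∈ H n) → g = 1)
    (comm_mem : ∀ n, ∀ g ∈ H n, ∀ x : G, x⁻¹ * g⁻¹ * x * g ∈ H (n + 1))
    (mem_of_pow_mem : ∀ n, ∀ g ∈ H n, ∀ k ≠ 0, g ^ k ∈ H (n + 1) → g ∈ H (n + 1)) :
    ∃ r : G → G → Prop, IsBiOrdering r := by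
  have normal n : (H n).Normal := Subgroup.normal_of_commutator_mem (desc n) (comm_mem n)
  have hP n : ∃ P, IsRelPositiveCone (H n) (H (n + 1)) P := by
    have : ((H (n + 1)).subgroupOf (H n)).Normal := Subgroup.normal_subgroupOf
    exact exists_isRelPositiveCone (fun g _ h hh ↦ comm_mem n h hh g) (mem_of_pow_mem n)
  choose P hP using hP
  exact ⟨_, isBiOrdering_of_positiveCone
    (fun _ hg _ hh ↦ mul_mem_iUnion_of_isRelPositiveCone desc normal hP hg hh)
    (fun _ hg ↦ conj_mem_iUnion_of_isRelPositiveCone normal comm_mem hP hg)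
    (one_notMem_iUnion_of_isRelPositiveCone hP)
    (fun _ hg ↦ mem_or_inv_mem_iUnion_of_isRelPositiveCone top inter hP hg)⟩

end CentralSeries

end

theorem biorderable_of_central_tower_general {G : Type*} [Group G] (Gk : ℕ → Subgroup G)
    (hone : Gk 1 = ⊤)
    (hdesc : ∀ k : ℕ, 1 ≤ k → Gk (k + 1) ≤ Gk k)
    (hinter : ∀ g : G, (∀ k : ℕ, 1 ≤ k → g ∈ Gk k) → g = 1)
    (hcentral : ∀ k : ℕ, 1 ≤ k → ∀ g ∈ Gk k, ∀ x : G,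
        x⁻¹ * g⁻¹ * x * g ∈ Gk (k + 1))
    (htf : ∀ k : ℕ, 1 ≤ k → ∀ g ∈ Gk k, ∀ n : ℕ, 1 ≤ n →
        g ^ n ∈ Gk (k + 1) → g ∈ Gk (k + 1)) :
    ∃ r : G → G → Prop, IsBiOrdering r :=
  exists_isBiOrdering_of_central_series (fun n ↦ Gk (n + 1)) hone
    (fun n ↦ hdesc (n + 1) n.succ_pos)
    (fun g hg ↦ hinter g fun k hk ↦ by simpa [Nat.sub_add_cancel hk] using hg (k - 1))
    (fun n ↦ hcentral (n + 1) n.succ_pos)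
    (fun n g hg k hk ↦ htf (n + 1) n.succ_pos g hg k (Nat.one_le_iff_ne_zero.2 hk))

/-- If `G` has a descending chain of normal subgroups
`(G_k)_{k ≥ 1}` with `G₁ = G` and `⋂ G_k = {1}`, such that each extension
`1 → G_k/G_{k+1} → G/G_{k+1} → G/G_k → 1` is central (i.e. `[G, G_k] ⊆ G_{k+1}`)
and each quotient `G_k/G_{k+1}` is torsion-free (abelian), then `G` is
bi-orderable. -/
theorem biorderable_of_central_tower {G : Type*} [Group G] (Gk : ℕ → Subgroup G)
    (hnormal : ∀ k : ℕ, 1 ≤ k → (Gk k).Normal)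
    (hone : Gk 1 = ⊤)
    (hdesc : ∀ k : ℕ, 1 ≤ k → Gk (k + 1) ≤ Gk k)
    (hinter : ∀ g : G, (∀ k : ℕ, 1 ≤ k → g ∈ Gk k) → g = 1)
    (hcentral : ∀ k : ℕ, 1 ≤ k → ∀ g ∈ Gk k, ∀ x : G,
        x⁻¹ * g⁻¹ * x * g ∈ Gk (k + 1))
    (htf : ∀ k : ℕ, 1 ≤ k → ∀ g ∈ Gk k, ∀ n : ℕ, 1 ≤ n →
        g ^ n ∈ Gk (k + 1) → g ∈ Gk (k + 1)) :
    ∃ r : G → G → Prop, IsBiOrdering r :=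
  biorderable_of_central_tower_general Gk hone hdesc hinter hcentral htf
end

section
/- Let R = ⊕_{i≥0} R^i be a graded ℝ-algebra with multiplicative filtration F^k R = ⊕_{i≥k} R^i, and let Θ : G → R× be an injective group homomorphism whose image lies in 1 + F¹R. Fix for each i a linear total order <_i on R^i that is invariant under addition. Define a < b for a,b ∈ G iff at the smallest degree i where the degree-i components of Θ(a) and Θ(b) differ, the component of Θ(a) is <_i-smaller than that of Θ(b). Then < is a bi-invariant total order on G. -/
/-- `F^k = ⨁_{i ≥ k} R^i`, in terms of the projections onto the graded pieces. -/
def degFiltration {A : Type*} [AddGroup A] (π : ℕ → A →+ A) (k : ℕ) : AddSubgroup A where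
  carrier := {x | ∀ m < k, π m x = 0}
  zero_mem' := fun m _ => map_zero (π m)
  add_mem' := fun hx hy m hm => by rw [map_add, hx m hm, hy m hm, add_zero]
  neg_mem' := fun hx m hm => by rw [map_neg, hx m hm, neg_zero]

theorem mem_degFiltration {A : Type*} [AddGroup A] {π : ℕ → A →+ A} {k : ℕ} {x : A} :
    x ∈ degFiltration π k ↔ ∀ m < k, π m x = 0 :=
  Iff.rfl

theorem sub_mem_degFiltration {A : Type*} [AddGroup A] {π : ℕ → A →+ A} {k : ℕ} {x y : A} :
    x - y ∈ degFiltration π k ↔ ∀ m < k, π m x = π m y := by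
  simp only [mem_degFiltration, map_sub, sub_eq_zero]

def gradedLexLt {A : Type*} [AddGroup A] (π : ℕ → A →+ A) (o : ℕ → A → A → Prop)
    (x y : A) : Prop :=
  ∃ i, o i (π i x) (π i y) ∧ ∀ m < i, π m x = π m y

section Order

variable {A : Type*} [AddCommGroup A] {Rg : ℕ → AddSubgroup A} {π : ℕ → A →+ A}
  {o : ℕ → A → A → Prop}

theorem gradedLexLt_irrefl (hmem : ∀ i x, π i x ∈ Rg i)
    (hirr : ∀ i, ∀ x ∈ Rg i, ¬ o i x x) (x : A) : ¬ gradedLexLt π o x x :=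
  fun ⟨i, hlt, _⟩ => hirr i _ (hmem i x) hlt

theorem gradedLexLt_trans (hmem : ∀ i x, π i x ∈ Rg i)
    (htrans : ∀ i, ∀ x ∈ Rg i, ∀ y ∈ Rg i, ∀ z ∈ Rg i, o i x y → o i y z → o i x z)
    {x y z : A} : gradedLexLt π o x y → gradedLexLt π o y z → gradedLexLt π o x z := by
  rintro ⟨i, hi, hxy⟩ ⟨j, hj, hyz⟩
  rcases lt_trichotomy i j with h | rfl | h
  · exact ⟨i, hyz i h ▸ hi, fun m hm => (hxy m hm).trans (hyz m (hm.trans h))⟩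
  · exact ⟨i, htrans i _ (hmem _ _) _ (hmem _ _) _ (hmem _ _) hi hj,
      fun m hm => (hxy m hm).trans (hyz m hm)⟩
  · exact ⟨j, (hxy j h).symm ▸ hj, fun m hm => (hxy m (hm.trans h)).trans (hyz m hm)⟩

theorem gradedLexLt_trichotomous (hmem : ∀ i x, π i x ∈ Rg i)
    (hsep : ∀ x, (∀ i, π i x = 0) → x = 0)
    (htri : ∀ i, ∀ x ∈ Rg i, ∀ y ∈ Rg i, o i x y ∨ x = y ∨ o i y x) (x y : A) :
    gradedLexLt π o x y ∨ x = y ∨ gradedLexLt π o y x := by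
  classical
  by_cases hdiff : ∃ i, π i x ≠ π i y
  · have hbelow : ∀ m < Nat.find hdiff, π m x = π m y := fun m hm => by
      simpa using Nat.find_min hdiff hm
    rcases htri _ _ (hmem _ x) _ (hmem _ y) with h | h | h
    · exact Or.inl ⟨_, h, hbelow⟩
    · exact absurd h (Nat.find_spec hdiff)
    · exact Or.inr (Or.inr ⟨_, h, fun m hm => (hbelow m hm).symm⟩)
  · push Not at hdiff
    exact Or.inr (Or.inl (sub_eq_zero.mp (hsep _ fun i => by rw [map_sub, hdiff i, sub_self])))

theorem gradedLexLt_isStrictTotalOrder (hmem : ∀ i x, π i x ∈ Rg i)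
    (hsep : ∀ x, (∀ i, π i x = 0) → x = 0)
    (htri : ∀ i, ∀ x ∈ Rg i, ∀ y ∈ Rg i, o i x y ∨ x = y ∨ o i y x)
    (hirr : ∀ i, ∀ x ∈ Rg i, ¬ o i x x)
    (htrans : ∀ i, ∀ x ∈ Rg i, ∀ y ∈ Rg i, ∀ z ∈ Rg i, o i x y → o i y z → o i x z) :
    IsStrictTotalOrder A (gradedLexLt π o) where
  trichotomous x y hxy hyx := ((gradedLexLt_trichotomous hmem hsep htri x y).resolve_left
    hxy).resolve_right hyx
  irrefl := gradedLexLt_irrefl hmem hirr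
  trans _ _ _ := gradedLexLt_trans hmem htrans

/-- The two pairs differ in degree `i` by a common shift, which the translation invariance of
`o i` absorbs. -/
theorem gradedLexLt_of_sub_sub_mem (hmem : ∀ i x, π i x ∈ Rg i)
    (hadd : ∀ i, ∀ x ∈ Rg i, ∀ y ∈ Rg i, ∀ z ∈ Rg i, o i x y → o i (x + z) (y + z))
    {i : ℕ} {x y x' y' : A} (hlt : o i (π i x) (π i y)) (hxy : x - y ∈ degFiltration π i)
    (hshift : (x' - y') - (x - y) ∈ degFiltration π (i + 1)) : gradedLexLt π o x' y' := by
  have hdeg : ∀ m ≤ i, π m x' - π m y' = π m x - π m y := fun m hm => by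
    simpa [sub_eq_zero] using hshift m (Nat.lt_succ_of_le hm)
  refine ⟨i, ?_, fun m hm => ?_⟩
  · obtain ⟨z, hz, hx', hy'⟩ : ∃ z ∈ Rg i, π i x' = π i x + z ∧ π i y' = π i y + z := by
      refine ⟨π i y' - π i y, (Rg i).sub_mem (hmem _ _) (hmem _ _), ?_, by abel⟩
      calc π i x' = (π i x' - π i y') + π i y' := (sub_add_cancel _ _).symm
        _ = (π i x - π i y) + π i y' := by rw [hdeg i le_rfl]
        _ = π i x + (π i y' - π i y) := by abel
    rw [hx', hy']
    exact hadd i _ (hmem _ _) _ (hmem _ _) z hz hlt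
  · rw [← sub_eq_zero, hdeg m hm.le, sub_eq_zero.mpr (sub_mem_degFiltration.mp hxy m hm)]

end Order

section Ring

variable {A : Type*} [Ring A] {Rg : ℕ → AddSubgroup A} {π : ℕ → A →+ A}
  {o : ℕ → A → A → Prop}

theorem mul_left_sub_sub_mem_degFiltration
    (hFmul : ∀ k l x y, x ∈ degFiltration π k → y ∈ degFiltration π l →
      x * y ∈ degFiltration π (k + l))
    {u x y : A} {i : ℕ} (hu : u - 1 ∈ degFiltration π 1) (hxy : x - y ∈ degFiltration π i) :
    (u * x - u * y) - (x - y) ∈ degFiltration π (i + 1) := by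
  have h : (u * x - u * y) - (x - y) = (u - 1) * (x - y) := by noncomm_ring
  rw [h, add_comm]
  exact hFmul 1 i _ _ hu hxy

theorem mul_right_sub_sub_mem_degFiltration
    (hFmul : ∀ k l x y, x ∈ degFiltration π k → y ∈ degFiltration π l →
      x * y ∈ degFiltration π (k + l))
    {u x y : A} {i : ℕ} (hu : u - 1 ∈ degFiltration π 1) (hxy : x - y ∈ degFiltration π i) :
    (x * u - y * u) - (x - y) ∈ degFiltration π (i + 1) := by
  have h : (x * u - y * u) - (x - y) = (x - y) * (u - 1) := by noncomm_ring
  rw [h]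
  exact hFmul i 1 _ _ hxy hu

variable (hmem : ∀ i x, π i x ∈ Rg i)
  (hadd : ∀ i, ∀ x ∈ Rg i, ∀ y ∈ Rg i, ∀ z ∈ Rg i, o i x y → o i (x + z) (y + z))
  (hFmul : ∀ k l x y, x ∈ degFiltration π k → y ∈ degFiltration π l →
    x * y ∈ degFiltration π (k + l))
include hmem hadd hFmul

theorem gradedLexLt.mul_left {u x y : A} (hu : u - 1 ∈ degFiltration π 1)
    (h : gradedLexLt π o x y) : gradedLexLt π o (u * x) (u * y) :=
  let ⟨_, hlt, hbelow⟩ := h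
  have hxy := sub_mem_degFiltration.mpr hbelow
  gradedLexLt_of_sub_sub_mem hmem hadd hlt hxy
    (mul_left_sub_sub_mem_degFiltration hFmul hu hxy)

theorem gradedLexLt.mul_right {u x y : A} (hu : u - 1 ∈ degFiltration π 1)
    (h : gradedLexLt π o x y) : gradedLexLt π o (x * u) (y * u) :=
  let ⟨_, hlt, hbelow⟩ := h
  have hxy := sub_mem_degFiltration.mpr hbelow
  gradedLexLt_of_sub_sub_mem hmem hadd hlt hxy
    (mul_right_sub_sub_mem_degFiltration hFmul hu hxy)

end Ring

theorem holonomy_ordering_biinvariant_general {A : Type*} [Ring A] {Γ : Type*} [Group Γ]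
    (Rg : ℕ → AddSubgroup A) (π : ℕ → A →+ A)
    (hmem : ∀ (i : ℕ) (x : A), π i x ∈ Rg i)
    (hsep : ∀ x : A, (∀ i : ℕ, π i x = 0) → x = 0)
    (hFmul : ∀ (k l : ℕ) (x y : A), (∀ m : ℕ, m < k → π m x = 0) →
      (∀ m : ℕ, m < l → π m y = 0) → ∀ m : ℕ, m < k + l → π m (x * y) = 0)
    (o : ℕ → A → A → Prop)
    (htri : ∀ i : ℕ, ∀ x ∈ Rg i, ∀ y ∈ Rg i, o i x y ∨ x = y ∨ o i y x)
    (hirr : ∀ i : ℕ, ∀ x ∈ Rg i, ¬ o i x x)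
    (htrans : ∀ i : ℕ, ∀ x ∈ Rg i, ∀ y ∈ Rg i, ∀ z ∈ Rg i,
      o i x y → o i y z → o i x z)
    (hadd : ∀ i : ℕ, ∀ x ∈ Rg i, ∀ y ∈ Rg i, ∀ z ∈ Rg i,
      o i x y → o i (x + z) (y + z))
    (Θ : Γ →* A) (hinj : Function.Injective Θ)
    (hΘ : ∀ g : Γ, ∀ m : ℕ, m < 1 → π m (Θ g - 1) = 0) :
    IsBiOrdering (fun a b : Γ => ∃ i : ℕ,
      o i (π i (Θ a)) (π i (Θ b)) ∧ ∀ m : ℕ, m < i → π m (Θ a) = π m (Θ b)) := by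
  change IsBiOrdering fun a b => gradedLexLt π o (Θ a) (Θ b)
  have := gradedLexLt_isStrictTotalOrder hmem hsep htri hirr htrans
  refine ⟨hinj.isStrictTotalOrder_onFun (gradedLexLt π o),
    fun a b c (hab : gradedLexLt π o (Θ a) (Θ b)) => ?_⟩
  simp only [map_mul]
  exact ⟨hab.mul_left hmem hadd hFmul (hΘ c), hab.mul_right hmem hadd hFmul (hΘ c)⟩

/-- Let `A = ⊕ R^i` be a graded algebra, with projections
`π i` onto the graded pieces `Rg i`, with multiplicative filtration
`F^k = {x | π m x = 0 for m < k}` (so `F^k · F^l ⊆ F^{k+l}`), and let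
`Θ : Γ → A` be an injective group homomorphism with image in `1 + F¹`.
Fix on each `Rg i` a translation-invariant strict total order `o i`.  Then the
relation comparing `Θ a` and `Θ b` at the smallest degree where their
components differ is a bi-invariant total order on `Γ`. -/
theorem holonomy_ordering_biinvariant {A : Type*} [Ring A] {Γ : Type*} [Group Γ]
    (Rg : ℕ → AddSubgroup A) (π : ℕ → A →+ A)
    (hmem : ∀ (i : ℕ) (x : A), π i x ∈ Rg i)
    (hproj : ∀ i : ℕ, ∀ x ∈ Rg i, π i x = x)
    (horth : ∀ i j : ℕ, i ≠ j → ∀ x ∈ Rg i, π j x = 0)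
    (hsep : ∀ x : A, (∀ i : ℕ, π i x = 0) → x = 0)
    (hFmul : ∀ (k l : ℕ) (x y : A), (∀ m : ℕ, m < k → π m x = 0) →
      (∀ m : ℕ, m < l → π m y = 0) → ∀ m : ℕ, m < k + l → π m (x * y) = 0)
    (o : ℕ → A → A → Prop)
    (htri : ∀ i : ℕ, ∀ x ∈ Rg i, ∀ y ∈ Rg i, o i x y ∨ x = y ∨ o i y x)
    (hirr : ∀ i : ℕ, ∀ x ∈ Rg i, ¬ o i x x)
    (htrans : ∀ i : ℕ, ∀ x ∈ Rg i, ∀ y ∈ Rg i, ∀ z ∈ Rg i,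
      o i x y → o i y z → o i x z)
    (hadd : ∀ i : ℕ, ∀ x ∈ Rg i, ∀ y ∈ Rg i, ∀ z ∈ Rg i,
      o i x y → o i (x + z) (y + z))
    (Θ : Γ →* A) (hinj : Function.Injective Θ)
    (hΘ : ∀ g : Γ, ∀ m : ℕ, m < 1 → π m (Θ g - 1) = 0) :
    IsBiOrdering (fun a b : Γ => ∃ i : ℕ,
      o i (π i (Θ a)) (π i (Θ b)) ∧ ∀ m : ℕ, m < i → π m (Θ a) = π m (Θ b)) :=
  holonomy_ordering_biinvariant_general Rg π hmem hsep hFmul o htri hirr htrans hadd Θ hinj hΘ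
end

section
/- Let μ, Θ : Fₙ → ℝ⟨⟨X₁,…,Xₙ⟩⟩ be two injective homomorphisms with μ(xᵢ) = 1 + Xᵢ and Θ(xᵢ) = 1 + Xᵢ + (terms of degree ≥ 2), and suppose Θ = α ∘ μ for a filtration-preserving algebra automorphism α with α(Xᵢ) ≡ Xᵢ mod J². Then the total orders on Fₙ defined lexicographically from the DegLex-ordered coefficient functions of μ and of Θ respectively coincide. -/
noncomputable section

/-- The DegLex ordering on noncommutative monomials (words): compare first by
degree (length), then lexicographically by the index sequence. -/
def DegLexWord {n : ℕ} (w w' : List (Fin n)) : Prop :=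
  w.length < w'.length ∨ (w.length = w'.length ∧ List.Lex (· < ·) w w')

/-- The total order on the free group defined lexicographically from the
DegLex-ordered coefficient functions of an injective expansion `ν`. -/
def coeffLt {n : ℕ} (ν : FreeGroup (Fin n) →* NCSeries n ℝ)
    (a b : FreeGroup (Fin n)) : Prop :=
  ∃ w : List (Fin n), ν a w < ν b w ∧
    ∀ w' : List (Fin n), DegLexWord w' w → ν a w' = ν b w'

/-!
Write `J^k` for the series with no coefficients in degree `< k`. A ring endomorphism `α` that
preserves this filtration, fixes constants and moves each `Xᵢ` only within `J²` satisfies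
`α x - x ∈ J^(k+1)` for `x ∈ J^k`: write `x = ∑ Xᵢ tᵢ` with `tᵢ ∈ J^(k-1)` and induct on `k`.
Hence `α` fixes the lowest-degree component of every series, in particular the DegLex-first
nonzero coefficient of `μ b - μ a`, whose sign decides `a < b`; and `α (μ b - μ a) = Θ b - Θ a`.
-/

theorem DegLexWord.length_le {n : ℕ} {w' w : List (Fin n)} (h : DegLexWord w' w) :
    w'.length ≤ w.length := by
  rcases h with h | ⟨h, _⟩ <;> omega

namespace NCSeries

variable {n : ℕ} {R : Type*} [CommRing R]

@[simp]
theorem sub_apply (f g : NCSeries n R) (w : List (Fin n)) : (f - g) w = f w - g w := rfl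

@[simp]
theorem smul_apply (c : R) (f : NCSeries n R) (w : List (Fin n)) : (c • f) w = c * f w := rfl

theorem sum_apply {ι : Type*} (s : Finset ι) (f : ι → NCSeries n R) (w : List (Fin n)) :
    (∑ i ∈ s, f i) w = ∑ i ∈ s, f i w :=
  Finset.sum_apply w s f

variable (R) in
/-- `filtration R k` is `J^k`, the `k`-th power of the augmentation ideal. -/
def filtration (k : ℕ) : AddSubgroup (NCSeries n R) where
  carrier := {x | ∀ w : List (Fin n), w.length < k → x w = 0}
  add_mem' hx hy w hw := by rw [add_def, hx w hw, hy w hw, add_zero]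
  zero_mem' _ _ := rfl
  neg_mem' hx w hw := neg_eq_zero.2 (hx w hw)

theorem filtration_antitone : Antitone (filtration (n := n) R) :=
  fun _ _ hkm _ hx w hw => hx w (lt_of_lt_of_le hw hkm)

theorem mul_mem_filtration {p q : ℕ} {f g : NCSeries n R} (hf : f ∈ filtration R p)
    (hg : g ∈ filtration R q) : f * g ∈ filtration R (p + q) := by
  intro w hw
  refine Finset.sum_eq_zero fun j _ => ?_
  by_cases hj : (w.take j).length < p
  · rw [hf _ hj, zero_mul]
  · rw [hg _ (by rw [List.length_drop]; rw [List.length_take] at hj; omega), mul_zero]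

theorem X_mem_filtration_one (i : Fin n) : X i ∈ filtration R 1 := by
  intro w hw
  rw [List.length_eq_zero_iff.1 (Nat.lt_one_iff.1 hw)]
  rfl

theorem sub_smul_one_mem_filtration_one (x : NCSeries n R) : x - x [] • 1 ∈ filtration R 1 := by
  intro w hw
  rw [List.length_eq_zero_iff.1 (Nat.lt_one_iff.1 hw), sub_apply, smul_apply, one_def, if_pos rfl,
    mul_one, sub_self]

theorem mem_filtration_of_forall_degLexWord {d : NCSeries n R} {w : List (Fin n)}
    (h : ∀ w', DegLexWord w' w → d w' = 0) : d ∈ filtration R w.length :=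
  fun w' hw' => h w' (Or.inl hw')

/-- The left quotient `Xᵢ⁻¹ x`. -/
def tail (i : Fin n) (x : NCSeries n R) : NCSeries n R := fun w => x (i :: w)

theorem tail_mem_filtration {k : ℕ} {x : NCSeries n R} (hx : x ∈ filtration R (k + 1))
    (i : Fin n) : tail i x ∈ filtration R k :=
  fun w hw => hx (i :: w) (Nat.succ_lt_succ hw)

theorem X_mul_apply_nil (i : Fin n) (x : NCSeries n R) : (X i * x : NCSeries n R) [] = 0 := by
  simp [mul_def, X]

theorem X_mul_apply_cons (i a : Fin n) (w : List (Fin n)) (x : NCSeries n R) :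
    (X i * x : NCSeries n R) (a :: w) = if a = i then x w else 0 := by
  rw [mul_def, Finset.sum_eq_single_of_mem 1 (by simp)]
  · by_cases hai : a = i <;> simp [X, hai]
  · intro j hj hj1
    have hne : (a :: w).take j ≠ [i] := fun h => by
      have := congrArg List.length h
      simp only [List.length_take, List.length_cons, List.length_nil,
        Finset.mem_range] at this hj
      omega
    simp only [X, if_neg hne, zero_mul]

theorem eq_sum_X_mul_tail {x : NCSeries n R} (hx : x [] = 0) :
    x = ∑ i : Fin n, X i * tail i x := by
  funext w
  rw [sum_apply]
  cases w with
  | nil => simp [hx, X_mul_apply_nil]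
  | cons a w =>
    rw [Finset.sum_eq_single a (fun i _ hia => by rw [X_mul_apply_cons, if_neg (Ne.symm hia)])
      (by simp), X_mul_apply_cons, if_pos rfl]
    rfl

def IsDegLexPos [PartialOrder R] (d : NCSeries n R) : Prop :=
  ∃ w : List (Fin n), 0 < d w ∧ ∀ w' : List (Fin n), DegLexWord w' w → d w' = 0

structure IsTangentToIdentity (α : NCSeries n R →+* NCSeries n R) : Prop where
  map_mem_filtration : ∀ (x : NCSeries n R) (k : ℕ), x ∈ filtration R k → α x ∈ filtration R k
  map_smul_one : ∀ c : R, α (c • 1) = c • 1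
  map_X_sub_X_mem : ∀ i : Fin n, α (X i) - X i ∈ filtration R 2

namespace IsTangentToIdentity

variable {α : NCSeries n R →+* NCSeries n R}

theorem map_sub_self_mem_filtration_succ (hα : IsTangentToIdentity α) :
    ∀ (k : ℕ) (x : NCSeries n R), x ∈ filtration R k → α x - x ∈ filtration R (k + 1)
  | 0, x, _ => by
    set y := x - x [] • 1
    have hsplit : α x - x = α y - y := by
      simp only [y, map_sub, hα.map_smul_one]
      abel
    rw [hsplit]
    exact sub_mem (hα.map_mem_filtration y 1 (sub_smul_one_mem_filtration_one x))
      (sub_smul_one_mem_filtration_one x)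
  | k + 1, x, hx => by
    have ht := tail_mem_filtration hx
    -- the two summands lie in `J² J^k` and `J J^(k+1)`
    have hsplit : α x - x = ∑ i : Fin n,
        ((α (X i) - X i) * α (tail i x) + X i * (α (tail i x) - tail i x)) := by
      conv_lhs => rw [eq_sum_X_mul_tail (hx [] (Nat.succ_pos _))]
      rw [map_sum, ← Finset.sum_sub_distrib]
      refine Finset.sum_congr rfl fun i _ => ?_
      rw [map_mul]
      noncomm_ring
    rw [hsplit]
    refine sum_mem fun i _ => add_mem ?_ ?_
    · exact filtration_antitone (by omega)
        (mul_mem_filtration (hα.map_X_sub_X_mem i) (hα.map_mem_filtration _ k (ht i)))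
    · exact filtration_antitone (by omega) (mul_mem_filtration (X_mem_filtration_one i)
        (map_sub_self_mem_filtration_succ hα k _ (ht i)))

theorem apply_eq_of_mem_filtration (hα : IsTangentToIdentity α) {k : ℕ} {x : NCSeries n R}
    (hx : x ∈ filtration R k) {w : List (Fin n)} (hw : w.length ≤ k) : α x w = x w :=
  sub_eq_zero.1 (hα.map_sub_self_mem_filtration_succ k x hx w (Nat.lt_succ_of_le hw))

theorem map_mem_filtration_iff (hα : IsTangentToIdentity α) {x : NCSeries n R} :
    ∀ {k : ℕ}, α x ∈ filtration R k ↔ x ∈ filtration R k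
  | 0 => ⟨fun _ _ h => absurd h (Nat.not_lt_zero _), fun _ _ h => absurd h (Nat.not_lt_zero _)⟩
  | k + 1 => by
    refine ⟨fun h => ?_, hα.map_mem_filtration x (k + 1)⟩
    have hx : x ∈ filtration R k :=
      (map_mem_filtration_iff hα).1 (filtration_antitone k.le_succ h)
    simpa using sub_mem h (hα.map_sub_self_mem_filtration_succ k x hx)

theorem isDegLexPos_map_iff [PartialOrder R] (hα : IsTangentToIdentity α) (d : NCSeries n R) :
    IsDegLexPos (α d) ↔ IsDegLexPos d := by
  have agree {w : List (Fin n)} (hd : d ∈ filtration R w.length) {w' : List (Fin n)}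
      (hw' : w'.length ≤ w.length) : α d w' = d w' :=
    hα.apply_eq_of_mem_filtration hd hw'
  constructor
  · rintro ⟨w, hpos, hzero⟩
    have hd := hα.map_mem_filtration_iff.1 (mem_filtration_of_forall_degLexWord hzero)
    refine ⟨w, agree hd le_rfl ▸ hpos, fun w' hw' => ?_⟩
    rw [← agree hd hw'.length_le, hzero w' hw']
  · rintro ⟨w, hpos, hzero⟩
    have hd := mem_filtration_of_forall_degLexWord hzero
    refine ⟨w, (agree hd le_rfl).symm ▸ hpos, fun w' hw' => ?_⟩
    rw [agree hd hw'.length_le, hzero w' hw']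

end IsTangentToIdentity

end NCSeries

open NCSeries

theorem coeffLt_iff_isDegLexPos_sub {n : ℕ} (ν : FreeGroup (Fin n) →* NCSeries n ℝ)
    (a b : FreeGroup (Fin n)) : coeffLt ν a b ↔ IsDegLexPos (ν b - ν a) := by
  simp only [coeffLt, IsDegLexPos, NCSeries.sub_apply, sub_pos, sub_eq_zero]
  exact exists_congr fun _ => and_congr_right' <| forall₂_congr fun _ _ => eq_comm

theorem magnus_and_holonomy_orders_coincide_general (n : ℕ)
    (μ Θ : FreeGroup (Fin n) →* NCSeries n ℝ)
    (α : NCSeries n ℝ →+* NCSeries n ℝ)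
    (hFilt : ∀ (x : NCSeries n ℝ) (k : ℕ), (∀ w : List (Fin n), w.length < k → x w = 0) →
      ∀ w : List (Fin n), w.length < k → α x w = 0)
    (hC : ∀ c : ℝ, α (c • (1 : NCSeries n ℝ)) = c • (1 : NCSeries n ℝ))
    (hX : ∀ i : Fin n, ∀ w : List (Fin n), w.length < 2 →
      (α (NCSeries.X i) - NCSeries.X i : NCSeries n ℝ) w = 0)
    (hcomp : ∀ g : FreeGroup (Fin n), Θ g = α (μ g)) :
    ∀ a b : FreeGroup (Fin n), coeffLt μ a b ↔ coeffLt Θ a b := by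
  have hα : IsTangentToIdentity α := ⟨hFilt, hC, hX⟩
  intro a b
  rw [coeffLt_iff_isDegLexPos_sub, coeffLt_iff_isDegLexPos_sub, hcomp, hcomp, ← map_sub α]
  exact (hα.isDegLexPos_map_iff _).symm

/-- Let `μ, Θ : Fₙ → ℝ⟨⟨X₁,…,Xₙ⟩⟩` be injective homomorphisms
with `μ(xᵢ) = 1 + Xᵢ`, `Θ(xᵢ) = 1 + Xᵢ + (degree ≥ 2)`, and `Θ = α ∘ μ` for a
filtration-preserving algebra automorphism `α` with `α(Xᵢ) ≡ Xᵢ mod J²`.  Then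
the total orders on `Fₙ` defined lexicographically from the DegLex-ordered
coefficient functions of `μ` and of `Θ` coincide. -/
theorem magnus_and_holonomy_orders_coincide (n : ℕ)
    (μ Θ : FreeGroup (Fin n) →* NCSeries n ℝ)
    (hμ : ∀ i : Fin n, μ (FreeGroup.of i) = 1 + NCSeries.X i)
    (hμinj : Function.Injective μ) (hΘinj : Function.Injective Θ)
    (α : NCSeries n ℝ →+* NCSeries n ℝ)
    (hFilt : ∀ (x : NCSeries n ℝ) (k : ℕ), (∀ w : List (Fin n), w.length < k → x w = 0) →
      ∀ w : List (Fin n), w.length < k → α x w = 0)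
    (hC : ∀ c : ℝ, α (c • (1 : NCSeries n ℝ)) = c • (1 : NCSeries n ℝ))
    (hX : ∀ i : Fin n, ∀ w : List (Fin n), w.length < 2 →
      (α (NCSeries.X i) - NCSeries.X i : NCSeries n ℝ) w = 0)
    (hcomp : ∀ g : FreeGroup (Fin n), Θ g = α (μ g))
    (hΘi : ∀ i : Fin n, ∀ w : List (Fin n), w.length < 2 →
      Θ (FreeGroup.of i) w = (1 + NCSeries.X i : NCSeries n ℝ) w) :
    ∀ a b : FreeGroup (Fin n), coeffLt μ a b ↔ coeffLt Θ a b :=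
  magnus_and_holonomy_orders_coincide_general n μ Θ α hFilt hC hX hcomp

end
end

section
/- Let 1 → H → G → K → 1 be a group extension in which the conjugation action of G on H preserves a given bi-ordering of H only up to the following nilpotent-type condition: H has a finite basis-indexed filtration such that each g ∈ G acts on the associated ordered data unitriangularly (g·vᵢ = vᵢ + linear combination of later basis vectors). Then the lexicographic product order built from a bi-ordering of K followed by the order on H determined by this triangular basis is a bi-ordering of G. -/
section Extension

variable {G K : Type*} [Group G] [Group K] (p : G →* K) (rK : K → K → Prop) (P : G → Prop)

def lexExtensionRel (g g' : G) : Prop :=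
  rK (p g) (p g') ∨ (p g = p g' ∧ P (g⁻¹ * g'))

variable {p rK P}

theorem lexExtensionRel_irrefl (hK : IsBiOrdering rK) (hP1 : ¬ P 1) (g : G) :
    ¬ lexExtensionRel p rK P g g := by
  rintro (h | ⟨-, h⟩)
  · exact hK.1.irrefl _ h
  · exact hP1 (by simpa using h)

theorem lexExtensionRel_trans (hK : IsBiOrdering rK)
    (hPmul : ∀ h ∈ p.ker, ∀ h' ∈ p.ker, P h → P h' → P (h * h')) {a b c : G}
    (hab : lexExtensionRel p rK P a b) (hbc : lexExtensionRel p rK P b c) :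
    lexExtensionRel p rK P a c := by
  rcases hab with hab | ⟨hab, Pab⟩ <;> rcases hbc with hbc | ⟨hbc, Pbc⟩
  · exact Or.inl (hK.1.trans _ _ _ hab hbc)
  · exact Or.inl (hbc ▸ hab)
  · exact Or.inl (hab ▸ hbc)
  · refine Or.inr ⟨hab.trans hbc, ?_⟩
    rw [show a⁻¹ * c = (a⁻¹ * b) * (b⁻¹ * c) by group]
    exact hPmul _ (p.eq_iff.mp hab.symm) _ (p.eq_iff.mp hbc.symm) Pab Pbc

theorem lexExtensionRel_trichotomous (hK : IsBiOrdering rK)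
    (hPtotal : ∀ h ∈ p.ker, h ≠ 1 → P h ∨ P h⁻¹) (a b : G) :
    lexExtensionRel p rK P a b ∨ a = b ∨ lexExtensionRel p rK P b a := by
  have := hK.1
  rcases trichotomous_of rK (p a) (p b) with hlt | heq | hgt
  · exact Or.inl (Or.inl hlt)
  · obtain rfl | hne := eq_or_ne a b
    · exact Or.inr (Or.inl rfl)
    rcases hPtotal _ (p.eq_iff.mp heq.symm) (by rwa [ne_eq, inv_mul_eq_one]) with h | h
    · exact Or.inl (Or.inr ⟨heq, h⟩)
    · exact Or.inr (Or.inr (Or.inr ⟨heq.symm, by simpa using h⟩))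
  · exact Or.inr (Or.inr (Or.inl hgt))

theorem lexExtensionRel_mul_left (hK : IsBiOrdering rK) {a b : G} (c : G)
    (hab : lexExtensionRel p rK P a b) : lexExtensionRel p rK P (c * a) (c * b) := by
  rcases hab with hab | ⟨hab, Pab⟩
  · exact Or.inl (by simpa only [map_mul] using (hK.2 _ _ (p c) hab).1)
  · exact Or.inr ⟨by simp only [map_mul, hab], by rwa [mul_inv_rev, mul_assoc, inv_mul_cancel_left]⟩

theorem lexExtensionRel_mul_right (hK : IsBiOrdering rK)
    (hPconj : ∀ g, ∀ h ∈ p.ker, P h → P (g * h * g⁻¹)) {a b : G} (c : G)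
    (hab : lexExtensionRel p rK P a b) : lexExtensionRel p rK P (a * c) (b * c) := by
  rcases hab with hab | ⟨hab, Pab⟩
  · exact Or.inl (by simpa only [map_mul] using (hK.2 _ _ (p c) hab).2)
  · refine Or.inr ⟨by simp only [map_mul, hab], ?_⟩
    rw [show (a * c)⁻¹ * (b * c) = c⁻¹ * (a⁻¹ * b) * c⁻¹⁻¹ by group]
    exact hPconj c⁻¹ _ (p.eq_iff.mp hab.symm) Pab

theorem isBiOrdering_lexExtensionRel (hK : IsBiOrdering rK) (hP1 : ¬ P 1)
    (hPmul : ∀ h ∈ p.ker, ∀ h' ∈ p.ker, P h → P h' → P (h * h'))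
    (hPtotal : ∀ h ∈ p.ker, h ≠ 1 → P h ∨ P h⁻¹)
    (hPconj : ∀ g, ∀ h ∈ p.ker, P h → P (g * h * g⁻¹)) :
    IsBiOrdering (lexExtensionRel p rK P) :=
  ⟨{ trichotomous a b hab hba :=
        ((lexExtensionRel_trichotomous hK hPtotal a b).resolve_left hab).resolve_right hba
     irrefl := lexExtensionRel_irrefl hK hP1
     trans _ _ _ := lexExtensionRel_trans hK hPmul },
    fun _ _ c hab => ⟨lexExtensionRel_mul_left hK c hab, lexExtensionRel_mul_right hK hPconj c hab⟩⟩

end Extension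

section Cone

variable {G A : Type*} [Group G] [AddCommGroup A] [LinearOrder A] [IsOrderedAddMonoid A]
  {N : Subgroup G} {f : G → A}

theorem apply_one_eq_zero_of_additiveOn (hadd : ∀ h ∈ N, ∀ h' ∈ N, f (h * h') = f h + f h') :
    f 1 = 0 := by
  simpa using hadd 1 N.one_mem 1 N.one_mem

theorem apply_inv_eq_neg_of_additiveOn (hadd : ∀ h ∈ N, ∀ h' ∈ N, f (h * h') = f h + f h')
    {h : G} (hh : h ∈ N) : f h⁻¹ = -f h := by
  have := hadd h hh h⁻¹ (N.inv_mem hh)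
  rw [mul_inv_cancel, apply_one_eq_zero_of_additiveOn hadd] at this
  exact eq_neg_of_add_eq_zero_right this.symm

theorem pos_apply_or_pos_apply_inv (hadd : ∀ h ∈ N, ∀ h' ∈ N, f (h * h') = f h + f h')
    (hinj : ∀ h ∈ N, ∀ h' ∈ N, f h = f h' → h = h') {h : G} (hh : h ∈ N) (hne : h ≠ 1) :
    0 < f h ∨ 0 < f h⁻¹ := by
  have hf1 := apply_one_eq_zero_of_additiveOn hadd
  have hfh : f h ≠ 0 := fun h0 => hne (hinj h hh 1 N.one_mem (h0.trans hf1.symm))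
  rw [apply_inv_eq_neg_of_additiveOn hadd hh, neg_pos]
  exact hfh.lt_or_gt.symm

theorem isBiOrdering_lexExtensionRel_of_additiveOn_ker {K : Type*} [Group K] {p : G →* K}
    {rK : K → K → Prop} (hK : IsBiOrdering rK)
    (hadd : ∀ h ∈ p.ker, ∀ h' ∈ p.ker, f (h * h') = f h + f h')
    (hinj : ∀ h ∈ p.ker, ∀ h' ∈ p.ker, f h = f h' → h = h')
    (hconj : ∀ g, ∀ h ∈ p.ker, 0 < f h → 0 < f (g * h * g⁻¹)) :
    IsBiOrdering (lexExtensionRel p rK (fun h => 0 < f h)) :=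
  isBiOrdering_lexExtensionRel hK (by simp [apply_one_eq_zero_of_additiveOn hadd])
    (fun h hh h' hh' hpos hpos' => (hadd h hh h' hh').symm ▸ add_pos hpos hpos')
    (fun _ hh hne => pos_apply_or_pos_apply_inv hadd hinj hh hne) hconj

end Cone

section LexCoordinates

variable {ι α : Type*} [Preorder ι] [Zero α] [LT α]

theorem toLex_pos_iff {v : ι → α} : 0 < toLex v ↔ ∃ j, 0 < v j ∧ ∀ i < j, v i = 0 :=
  ⟨fun ⟨j, hz, hj⟩ => ⟨j, hj, fun i hi => (hz i hi).symm⟩,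
    fun ⟨j, hj, hz⟩ => ⟨j, fun i hi => (hz i hi).symm, hj⟩⟩

theorem toLex_pos_of_eq_where_lower_vanish {v w : ι → α}
    (hw : ∀ j, (∀ i < j, v i = 0) → w j = v j) (hv : 0 < toLex v) : 0 < toLex w := by
  obtain ⟨j, hj, hz⟩ := toLex_pos_iff.mp hv
  have hwv : ∀ k ≤ j, w k = v k := fun k hk => hw k fun i hi => hz i (hi.trans_le hk)
  exact toLex_pos_iff.mpr ⟨j, hwv j le_rfl ▸ hj, fun i hi => (hwv i hi.le).trans (hz i hi)⟩

end LexCoordinates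

theorem quasi_nilpotent_extension_biordering_general {G K : Type*} [Group G] [Group K]
    (p : G →* K)
    (rK : K → K → Prop) (hK : IsBiOrdering rK)
    (m : ℕ) (φ : G → Fin m → ℝ)
    (hadd : ∀ h ∈ p.ker, ∀ h' ∈ p.ker, φ (h * h') = φ h + φ h')
    (hinj : ∀ h ∈ p.ker, ∀ h' ∈ p.ker, φ h = φ h' → h = h')
    (htriang : ∀ g : G, ∃ a : Fin m → Fin m → ℝ, ∀ h ∈ p.ker, ∀ j : Fin m,
      φ (g * h * g⁻¹) j = φ h j +
        ∑ i ∈ Finset.univ.filter (fun i : Fin m => i < j), a i j * φ h i) :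
    IsBiOrdering (fun g g' : G => rK (p g) (p g') ∨ (p g = p g' ∧
      ∃ j : Fin m, 0 < φ (g⁻¹ * g') j ∧ ∀ j' : Fin m, j' < j → φ (g⁻¹ * g') j' = 0)) := by
  have hconj : ∀ g, ∀ h ∈ p.ker, 0 < toLex (φ h) → 0 < toLex (φ (g * h * g⁻¹)) := by
    intro g h hh
    obtain ⟨a, ha⟩ := htriang g
    refine toLex_pos_of_eq_where_lower_vanish fun j hj => ?_
    rw [ha h hh j, Finset.sum_eq_zero fun i hi => by rw [hj i (Finset.mem_filter.mp hi).2, mul_zero],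
      add_zero]
  have := isBiOrdering_lexExtensionRel_of_additiveOn_ker (f := fun g => toLex (φ g)) hK
    (fun h hh h' hh' => congrArg toLex (hadd h hh h' hh'))
    (fun h hh h' hh' e => hinj h hh h' hh' (toLex.injective e)) hconj
  convert this using 3 with g g'
  exact or_congr_right (and_congr_right fun _ => toLex_pos_iff.symm)

/-- Let `1 → H → G → K → 1` be a group extension with
`H = ker p` an integral lattice in a real vector space with coordinates
`φ : H → ℝ^m` (so `φ` is additive and injective on `H`), and suppose the
conjugation action of `G` on `H` is unitriangular in these coordinates:
`φ(g h g⁻¹)ⱼ = φ(h)ⱼ + Σ_{i < j} a_{i,j} φ(h)ᵢ`.  Then the lexicographic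
product order, built from a bi-ordering of `K` followed by the lexicographic
order on `H` given by this triangular basis, is a bi-ordering of `G`. -/
theorem quasi_nilpotent_extension_biordering {G K : Type*} [Group G] [Group K]
    (p : G →* K) (hsurj : Function.Surjective p)
    (rK : K → K → Prop) (hK : IsBiOrdering rK)
    (m : ℕ) (φ : G → Fin m → ℝ)
    (hadd : ∀ h ∈ p.ker, ∀ h' ∈ p.ker, φ (h * h') = φ h + φ h')
    (hinj : ∀ h ∈ p.ker, ∀ h' ∈ p.ker, φ h = φ h' → h = h')
    (htriang : ∀ g : G, ∃ a : Fin m → Fin m → ℝ, ∀ h ∈ p.ker, ∀ j : Fin m,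
      φ (g * h * g⁻¹) j = φ h j +
        ∑ i ∈ Finset.univ.filter (fun i : Fin m => i < j), a i j * φ h i) :
    IsBiOrdering (fun g g' : G => rK (p g) (p g') ∨ (p g = p g' ∧
      ∃ j : Fin m, 0 < φ (g⁻¹ * g') j ∧ ∀ j' : Fin m, j' < j → φ (g⁻¹ * g') j' = 0)) :=
  quasi_nilpotent_extension_biordering_general p rK hK m φ hadd hinj htriang
end
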